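/- Suppose ε > 0, ‖∇z_c‖ > 0, k₂ > 0, b ∈ (0,1), cos γ > b, sin γ < √(1−b²), sin γ ≥ 0, and β = C + a·z_c with 0 < β and C + a·z_max < k₂b/√(1−b²) where z_c ≤ z_max. Then at z_c = z_d + ε, with α = k₂, the Lyapunov derivative V̇ = −ε‖∇z_c‖(k₂ cos γ − β sin γ) is strictly negative. -/
import Mathlib


/-- At `z_c = z_d + ε` with `α = k₂`, under the stated conditions,
`V̇ = −ε‖∇z_c‖(k₂ cos γ − β sin γ) < 0`. -/
theorem stmt3 (ε gradNorm k₂ b γ β C a zc zmax : ℝ)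
    (hε : 0 < ε) (hg : 0 < gradNorm) (hk₂ : 0 < k₂) (hb : b ∈ Set.Ioo (0 : ℝ) 1)
    (hcos : Real.cos γ > b) (hsin : Real.sin γ < Real.sqrt (1 - b ^ 2))
    (hsin0 : 0 ≤ Real.sin γ)
    (ha : 0 < a) (hβ : β = C + a * zc) (hβpos : 0 < β)
    (hzc : zc ≤ zmax)
    (hgain : C + a * zmax < k₂ * b / Real.sqrt (1 - b ^ 2)) :
    -ε * gradNorm * (k₂ * Real.cos γ - β * Real.sin γ) < 0 := by
  obtain ⟨hb0, hb1⟩ := hb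
  have hs : 0 < Real.sqrt (1 - b ^ 2) := Real.sqrt_pos.2 (by nlinarith)
  have hβle : β ≤ C + a * zmax := by nlinarith
  have h1 : β * Real.sin γ < β * Real.sqrt (1 - b ^ 2) :=
    mul_lt_mul_of_pos_left hsin hβpos
  have h2 : β * Real.sqrt (1 - b ^ 2) < k₂ * b := by
    have := mul_lt_mul_of_pos_right (lt_of_le_of_lt hβle hgain) hs
    rwa [div_mul_cancel₀ _ (ne_of_gt hs)] at this
  have h3 : β * Real.sin γ < k₂ * Real.cos γ := by nlinarith
  have hd : 0 < k₂ * Real.cos γ - β * Real.sin γ := by linarith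
  nlinarith [mul_pos (mul_pos hε hg) hd]
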